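/- Let X be a finite set and u, v: X → ℝ two functions that both represent the same total preorder ≼ on Dist(X) via expected value (A ≼ B ⟺ 𝔼_A[u] ≤ 𝔼_B[u] ⟺ 𝔼_A[v] ≤ 𝔼_B[v]). Then there exist real numbers a > 0 and b such that v = a·u + b, provided u is non-constant. -/

import Mathlib

open Finset

/-- `p` is a probability mass function on the finite type `X`. -/
def IsDist {X : Type*} [Fintype X] (p : X → ℝ) : Prop :=
  (∀ x, 0 ≤ p x) ∧ ∑ x, p x = 1

/-- Pointwise convex combination of two (distributions viewed as) functions. -/
def mix {X : Type*} (α : ℝ) (A B : X → ℝ) : X → ℝ :=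
  fun x => α * A x + (1 - α) * B x

/-- Expected value of `u` under `A`. -/
def expVal {X : Type*} [Fintype X] (u : X → ℝ) (A : X → ℝ) : ℝ := ∑ x, u x * A x

/-!
Let `u` attain its minimum at `m` and its maximum at `M`. Every sure outcome `x` is, in
expected `u`, indifferent to the lottery `t • δ_M + (1 - t) • δ_m` (where `δ_x = Pi.single x 1`) with
`t = (u x - u m) / (u M - u m)`. Since `v` ranks lotteries like `u`, the indifference holds
for `v` too, so `v x = v m + t (v M - v m)`: `v` is an affine function of `u`, with positive
slope because `v` strictly prefers `δ_M` to `δ_m` as `u` does.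
-/

section Lotteries

variable {X : Type*} [Fintype X]

def SameRanking (u v : X → ℝ) : Prop :=
  ∀ A B : X → ℝ, IsDist A → IsDist B → (expVal u A ≤ expVal u B ↔ expVal v A ≤ expVal v B)

theorem isDist_single [DecidableEq X] (x : X) : IsDist (Pi.single x 1 : X → ℝ) := by
  refine ⟨fun y => ?_, by simp⟩
  rw [Pi.single_apply]
  split_ifs <;> norm_num

@[simp]
theorem expVal_single [DecidableEq X] (u : X → ℝ) (x : X) :
    expVal u (Pi.single x 1) = u x := by
  simp [expVal, Pi.single_apply]

theorem IsDist.mix {A B : X → ℝ} {t : ℝ} (hA : IsDist A) (hB : IsDist B) (ht₀ : 0 ≤ t)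
    (ht₁ : t ≤ 1) : IsDist (mix t A B) := by
  refine ⟨fun x => ?_, ?_⟩
  · have := hA.1 x
    have := hB.1 x
    have : 0 ≤ 1 - t := by linarith
    unfold _root_.mix
    positivity
  · simp only [_root_.mix, sum_add_distrib, ← mul_sum, hA.2, hB.2]
    ring

@[simp]
theorem expVal_mix (u : X → ℝ) (t : ℝ) (A B : X → ℝ) :
    expVal u (mix t A B) = t * expVal u A + (1 - t) * expVal u B := by
  simp only [expVal, mix, mul_sum, ← sum_add_distrib]
  exact sum_congr rfl fun x _ => by ring

namespace SameRanking

variable {u v : X → ℝ}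

theorem expVal_eq (h : SameRanking u v) {A B : X → ℝ} (hA : IsDist A) (hB : IsDist B)
    (huAB : expVal u A = expVal u B) : expVal v A = expVal v B :=
  le_antisymm ((h A B hA hB).1 huAB.le) ((h B A hB hA).1 huAB.ge)

theorem lt_of_lt (h : SameRanking u v) {x y : X} (hxy : u x < u y) : v x < v y := by
  classical
  have := (h (Pi.single y 1) (Pi.single x 1) (isDist_single y) (isDist_single x)).not
  simp only [expVal_single, not_le] at this
  exact this.1 hxy

theorem eq_interpolate (h : SameRanking u v) {m M x : X} (hmx : u m ≤ u x) (hxM : u x ≤ u M)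
    (hmM : u m < u M) :
    v x = v m + (u x - u m) / (u M - u m) * (v M - v m) := by
  classical
  set t := (u x - u m) / (u M - u m)
  have hgap : u M - u m ≠ 0 := (sub_pos.2 hmM).ne'
  have ht₀ : 0 ≤ t := div_nonneg (by linarith) (by linarith)
  have ht₁ : t ≤ 1 := (div_le_one (by linarith)).2 (by linarith)
  have hlot := (isDist_single M).mix (isDist_single m) ht₀ ht₁
  have hu : expVal u (mix t (Pi.single M 1) (Pi.single m 1)) = expVal u (Pi.single x 1) := by
    simp only [expVal_mix, expVal_single, t]
    field_simp
    ring
  have hv := h.expVal_eq hlot (isDist_single x) hu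
  simp only [expVal_mix, expVal_single] at hv
  linarith

end SameRanking

end Lotteries

theorem vnm_uniqueness {X : Type*} [Fintype X]
    (u v : X → ℝ)
    (hrep : ∀ A B : X → ℝ, IsDist A → IsDist B →
      (expVal u A ≤ expVal u B ↔ expVal v A ≤ expVal v B))
    (hu : ∃ x y, u x ≠ u y) :
    ∃ a b : ℝ, 0 < a ∧ ∀ x, v x = a * u x + b := by
  obtain ⟨x, y, hxy⟩ := hu
  have : Nonempty X := ⟨x⟩
  obtain ⟨m, hm⟩ := Finite.exists_min u
  obtain ⟨M, hM⟩ := Finite.exists_max u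
  have hmM : u m < u M := by
    rcases hxy.lt_or_gt with h | h
    · exact (hm x).trans_lt (h.trans_le (hM y))
    · exact (hm y).trans_lt (h.trans_le (hM x))
  have hvmM : v m < v M := SameRanking.lt_of_lt hrep hmM
  refine ⟨(v M - v m) / (u M - u m), v m - (v M - v m) / (u M - u m) * u m,
    div_pos (sub_pos.2 hvmM) (sub_pos.2 hmM), fun z => ?_⟩
  rw [SameRanking.eq_interpolate hrep (hm z) (hM z) hmM]
  ring
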